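/- Let X be a closed subspace of a Banach space Y with property U in Y, and let q : Y* → X* be the restriction map. Then the restriction of q to the set HB(S_{X*}) of all Hahn–Banach extensions of unit functionals on X is a bijection onto S_{X*} which is a homeomorphism for the weak* topologies. -/

import Mathlib

open Filter Topology

/-!
Restriction `q : E* → X*` is weak*-continuous, so only the continuity of the inverse needs an
argument. The inverse sends `f` to its unique norm-preserving extension, which lies in the
weak*-compact unit ball of `E*`. If `g` is a weak*-cluster point of these extensions as
`f → f₀`, then `q g = f₀` by continuity of `q`, and `1 = ‖f₀‖ ≤ ‖g‖ ≤ 1`; so `g` is a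
norm-preserving extension of `f₀`, hence is the extension of `f₀` by property U. A net in a
compact set with a single cluster point converges to it.
-/

theorem IsCompact.continuous_of_unique_lift {α β γ : Type*} [TopologicalSpace α]
    [TopologicalSpace β] [T2Space β] [TopologicalSpace γ] {K : Set α} (hK : IsCompact K)
    {q : α → β} (hq : Continuous q) {p : γ → β} (hp : Continuous p) {s : γ → α}
    (hsK : ∀ c, s c ∈ K) (hs : ∀ c, ∀ a ∈ K, q a = p c ↔ a = s c) : Continuous s := by
  refine continuous_iff_continuousAt.2 fun c => hK.tendsto_nhds_of_unique_mapClusterPt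
    (Eventually.of_forall hsK) fun a ha hcl => (hs c a ha).1 ?_
  have hqs : q ∘ s = p := funext fun c => ((hs c (s c) (hsK c)).2 rfl)
  have hcl' : MapClusterPt (q a) (𝓝 c) p := hqs ▸ hcl.continuousAt_comp hq.continuousAt
  exact eq_of_nhds_neBot (ClusterPt.mono hcl' hp.continuousAt).neBot

section

variable {𝕜 E : Type*} [NontriviallyNormedField 𝕜] [SeminormedAddCommGroup E] [NormedSpace 𝕜 E]

theorem ContinuousLinearMap.norm_comp_subtypeL_le {F : Type*} [SeminormedAddCommGroup F]
    [NormedSpace 𝕜 F] (g : E →L[𝕜] F) (X : Submodule 𝕜 E) : ‖g.comp X.subtypeL‖ ≤ ‖g‖ :=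
  (g.opNorm_comp_le _).trans (mul_le_of_le_one_right (norm_nonneg g) X.norm_subtypeL_le)

namespace WeakDual

noncomputable def restrict (X : Submodule 𝕜 E) (g : WeakDual 𝕜 E) : WeakDual 𝕜 X :=
  (toStrongDual g).comp X.subtypeL

@[simp]
theorem toStrongDual_restrict (X : Submodule 𝕜 E) (g : WeakDual 𝕜 E) :
    toStrongDual (restrict X g) = (toStrongDual g).comp X.subtypeL :=
  rfl

theorem continuous_restrict (X : Submodule 𝕜 E) : Continuous (restrict X) :=
  continuous_of_continuous_eval fun x => eval_continuous (x : E)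

end WeakDual

def Submodule.HasPropertyU (X : Submodule 𝕜 E) : Prop :=
  ∀ f : X →L[𝕜] 𝕜, ∃! g : E →L[𝕜] 𝕜, (∀ x : X, g x = f x) ∧ ‖g‖ = ‖f‖

namespace Submodule.HasPropertyU

variable {X : Submodule 𝕜 E} (hU : X.HasPropertyU)

noncomputable def extend (f : X →L[𝕜] 𝕜) : E →L[𝕜] 𝕜 := (hU f).exists.choose

theorem extend_comp_subtypeL (f : X →L[𝕜] 𝕜) : (hU.extend f).comp X.subtypeL = f :=
  ContinuousLinearMap.ext (hU f).exists.choose_spec.1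

theorem norm_extend (f : X →L[𝕜] 𝕜) : ‖hU.extend f‖ = ‖f‖ :=
  (hU f).exists.choose_spec.2

/-- Restriction never increases the norm, so such a `g` is norm-preserving. -/
theorem eq_extend_of_norm_le {f : X →L[𝕜] 𝕜} {g : E →L[𝕜] 𝕜} (hg : g.comp X.subtypeL = f)
    (hn : ‖g‖ ≤ ‖f‖) : g = hU.extend f :=
  (hU f).unique ⟨fun x => congr($hg x), le_antisymm hn (hg ▸ g.norm_comp_subtypeL_le X)⟩
    ⟨fun x => congr($(hU.extend_comp_subtypeL f) x), hU.norm_extend f⟩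

theorem continuous_extend_unitSphere [ProperSpace 𝕜] :
    Continuous fun f : {f : WeakDual 𝕜 X // ‖WeakDual.toStrongDual f‖ = 1} =>
      StrongDual.toWeakDual (hU.extend (WeakDual.toStrongDual f.1)) := by
  refine (WeakDual.isCompact_closedBall (0 : StrongDual 𝕜 E) 1).continuous_of_unique_lift
    (WeakDual.continuous_restrict X) continuous_subtype_val (fun f => ?_) fun f g hg => ?_
  · simp [hU.norm_extend, f.2]
  · have hg1 : ‖WeakDual.toStrongDual g‖ ≤ ‖WeakDual.toStrongDual f.1‖ := by simpa [f.2] using hg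
    rw [← WeakDual.toStrongDual.injective.eq_iff, WeakDual.toStrongDual_restrict,
      ← WeakDual.toStrongDual.injective.eq_iff (a := g), StrongDual.toStrongDual_toWeakDual]
    exact ⟨fun hgf => hU.eq_extend_of_norm_le hgf hg1,
      fun hgf => by rw [hgf, hU.extend_comp_subtypeL]⟩

noncomputable def restrictHomeomorph [ProperSpace 𝕜] :
    {g : WeakDual 𝕜 E // ‖WeakDual.toStrongDual g‖ = 1 ∧
        ‖(WeakDual.toStrongDual g).comp X.subtypeL‖ = 1} ≃ₜ
      {f : WeakDual 𝕜 X // ‖WeakDual.toStrongDual f‖ = 1} where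
  toFun g := ⟨WeakDual.restrict X g, g.2.2⟩
  invFun f := ⟨StrongDual.toWeakDual (hU.extend (WeakDual.toStrongDual f.1)),
    by simp [hU.norm_extend, f.2], by simp [hU.extend_comp_subtypeL, f.2]⟩
  left_inv g := Subtype.ext (hU.eq_extend_of_norm_le rfl (by rw [g.2.1, g.2.2])).symm
  right_inv f := Subtype.ext (hU.extend_comp_subtypeL _)
  continuous_toFun := ((WeakDual.continuous_restrict X).comp continuous_subtype_val).subtype_mk _
  continuous_invFun := hU.continuous_extend_unitSphere.subtype_mk _

end Submodule.HasPropertyU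

end

theorem propertyU_restriction_weakStar_homeomorph_general
    (Y : Type*) [NormedAddCommGroup Y] [NormedSpace ℝ Y]
    (X : Subspace ℝ Y)
    (hU : ∀ f : X →L[ℝ] ℝ, ∃! g : Y →L[ℝ] ℝ, (∀ x : X, g x = f x) ∧ ‖g‖ = ‖f‖) :
    ∃ e : Homeomorph
        {g : WeakDual ℝ Y // ‖WeakDual.toStrongDual g‖ = 1 ∧
          ‖(WeakDual.toStrongDual g).comp X.subtypeL‖ = 1}
        {f : WeakDual ℝ X // ‖WeakDual.toStrongDual f‖ = 1},
      ∀ g, WeakDual.toStrongDual ((e g : {f : WeakDual ℝ X // ‖WeakDual.toStrongDual f‖ = 1}) :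
            WeakDual ℝ X)
          = (WeakDual.toStrongDual (g : WeakDual ℝ Y)).comp X.subtypeL :=
  ⟨Submodule.HasPropertyU.restrictHomeomorph hU, fun _ => rfl⟩

/-- If a closed subspace `X` of a Banach space `Y` has property U in `Y`, then the
restriction map `q : Y* → X*`, restricted to the set `HB(S_{X*})` of all Hahn–Banach
extensions of unit functionals of `X` (i.e. norm-one functionals on `Y` whose
restriction to `X` still has norm one), is a bijection onto `S_{X*}` which is a
homeomorphism for the weak* topologies. -/
theorem propertyU_restriction_weakStar_homeomorph
    (Y : Type*) [NormedAddCommGroup Y] [NormedSpace ℝ Y] [CompleteSpace Y]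
    (X : Subspace ℝ Y) (hX : IsClosed (X : Set Y))
    (hU : ∀ f : X →L[ℝ] ℝ, ∃! g : Y →L[ℝ] ℝ, (∀ x : X, g x = f x) ∧ ‖g‖ = ‖f‖) :
    ∃ e : Homeomorph
        {g : WeakDual ℝ Y // ‖WeakDual.toStrongDual g‖ = 1 ∧
          ‖(WeakDual.toStrongDual g).comp X.subtypeL‖ = 1}
        {f : WeakDual ℝ X // ‖WeakDual.toStrongDual f‖ = 1},
      ∀ g, WeakDual.toStrongDual ((e g : {f : WeakDual ℝ X // ‖WeakDual.toStrongDual f‖ = 1}) :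
            WeakDual ℝ X)
          = (WeakDual.toStrongDual (g : WeakDual ℝ Y)).comp X.subtypeL :=
  propertyU_restriction_weakStar_homeomorph_general Y X hU
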